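/- arXiv:2408.05261 — 3 statements merged into one kernel-verified Lean document; each statement's English description precedes it below -/
import Mathlib

section
/- Let H be a Hermitian operator on a finite-dimensional Hilbert space with H|ψ⟩ having norm ‖H|ψ⟩‖ ≤ M for a unit vector |ψ⟩, and suppose ⟨ψ|H|ψ⟩ ≥ Δ > 0 with Δ/2 < ⟨ψ|H|ψ⟩. Let Π_{>Δ/2} denote the spectral projection of H onto eigenvalues strictly greater than Δ/2. Then ‖Π_{>Δ/2}|ψ⟩‖ ≥ (⟨ψ|H|ψ⟩ − Δ/2)/M ≥ Δ/(2M). -/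
/-!
Split `ψ = P ψ + (1 - P) ψ`. Because `P` is an orthogonal projection commuting with `H`, the cross
terms vanish: `⟪ψ, H ψ⟫ = ⟪P ψ, H ψ⟫ + ⟪(1 - P) ψ, H ((1 - P) ψ)⟫`. As `(1 - P) ψ ∈ ker P` and
`‖(1 - P) ψ‖ ≤ 1`, the second term is at most `Δ/2`; the first is at most `‖P ψ‖ ‖H ψ‖ ≤ M ‖P ψ‖`
by Cauchy–Schwarz.
-/

namespace IsStarProjection

open RCLike
open scoped InnerProductSpace

variable {𝕜 E : Type*} [RCLike 𝕜] [NormedAddCommGroup E] [InnerProductSpace 𝕜 E] [CompleteSpace E]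
  {P T : E →L[𝕜] E}

theorem inner_apply_left_eq_inner_apply_apply (hP : IsStarProjection P) (x y : E) :
    ⟪P x, y⟫_𝕜 = ⟪P x, P y⟫_𝕜 := by
  calc ⟪P x, y⟫_𝕜 = ⟪P (P x), y⟫_𝕜 := by rw [← mul_apply_eq_comp, hP.isIdempotentElem.eq]
    _ = ⟪P x, P y⟫_𝕜 := hP.isSelfAdjoint.isSymmetric _ _

theorem inner_map_self_eq_add_of_commute (hP : IsStarProjection P) (hPT : Commute P T) (x : E) :
    ⟪x, T x⟫_𝕜 = ⟪P x, T x⟫_𝕜 + ⟪(1 - P) x, T ((1 - P) x)⟫_𝕜 := by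
  have hQT : Commute (1 - P) T := (Commute.one_left T).sub_left hPT
  calc ⟪x, T x⟫_𝕜 = ⟪P x + (1 - P) x, T x⟫_𝕜 := by simp
    _ = ⟪P x, T x⟫_𝕜 + ⟪(1 - P) x, (1 - P) (T x)⟫_𝕜 := by
      rw [inner_add_left, hP.one_sub.inner_apply_left_eq_inner_apply_apply]
    _ = ⟪P x, T x⟫_𝕜 + ⟪(1 - P) x, T ((1 - P) x)⟫_𝕜 := by
      rw [← mul_apply_eq_comp, hQT.eq, mul_apply_eq_comp]

theorem re_inner_map_self_sub_le_of_commute (hP : IsStarProjection P) (hPT : Commute P T) {c : ℝ}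
    (hc : 0 ≤ c) (hker : ∀ y, P y = 0 → re ⟪y, T y⟫_𝕜 ≤ c * ‖y‖ ^ 2) (x : E) :
    re ⟪x, T x⟫_𝕜 - c * ‖x‖ ^ 2 ≤ ‖P x‖ * ‖T x‖ := by
  have hker_compl : P ((1 - P) x) = 0 := by
    rw [← mul_apply_eq_comp, hP.mul_one_sub_self, zero_apply]
  have hnorm_compl : ‖(1 - P) x‖ ≤ ‖x‖ :=
    (ContinuousLinearMap.le_opNorm _ _).trans
      (mul_le_of_le_one_left (norm_nonneg x) (hP.one_sub.norm_le _))
  have hrange : re ⟪P x, T x⟫_𝕜 ≤ ‖P x‖ * ‖T x‖ :=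
    (re_le_norm _).trans (norm_inner_le_norm _ _)
  have hcompl : re ⟪(1 - P) x, T ((1 - P) x)⟫_𝕜 ≤ c * ‖x‖ ^ 2 :=
    (hker _ hker_compl).trans (by gcongr)
  rw [hP.inner_map_self_eq_add_of_commute hPT, map_add]
  linarith

end IsStarProjection

open scoped ComplexInnerProductSpace

theorem spectral_weight_above_half_gap_general
    {E : Type*} [NormedAddCommGroup E] [InnerProductSpace ℂ E] [FiniteDimensional ℂ E]
    (H : E →L[ℂ] E)
    (ψ : E) (hψ : ‖ψ‖ = 1)
    (M Δ : ℝ) (hΔ : 0 < Δ) (hM : 0 < M)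
    (hHψ : ‖H ψ‖ ≤ M)
    (hmean : Δ ≤ (⟪ψ, H ψ⟫).re)
    (Pr : E →L[ℂ] E) (hPrsa : IsSelfAdjoint Pr) (hPridem : Pr ∘L Pr = Pr)
    (hPrcomm : Pr ∘L H = H ∘L Pr)
    (hker : ∀ x : E, Pr x = 0 → (⟪x, H x⟫).re ≤ Δ / 2 * ‖x‖ ^ 2) :
    ((⟪ψ, H ψ⟫).re - Δ / 2) / M ≤ ‖Pr ψ‖ ∧ Δ / (2 * M) ≤ ((⟪ψ, H ψ⟫).re - Δ / 2) / M := by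
  have hgap := IsStarProjection.re_inner_map_self_sub_le_of_commute ⟨hPridem, hPrsa⟩ hPrcomm
    (by positivity) hker ψ
  rw [hψ, one_pow, mul_one, RCLike.re_to_complex] at hgap
  constructor
  · rw [div_le_iff₀ hM]
    nlinarith [norm_nonneg (Pr ψ)]
  · rw [div_le_div_iff₀ (by positivity) hM]
    nlinarith

/-- Spectral-weight estimate: a unit state with mean energy `≥ Δ` and bounded
energy second moment has weight at least `Δ/(2M)` above energy `Δ/2`.
`Pr` is the spectral projection of `H` onto eigenvalues strictly greater than `Δ/2`,
characterized by: it is an orthogonal projection commuting with `H`, `H > Δ/2` on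
its range and `H ≤ Δ/2` on its kernel. -/
theorem spectral_weight_above_half_gap
    {E : Type*} [NormedAddCommGroup E] [InnerProductSpace ℂ E] [FiniteDimensional ℂ E]
    (H : E →L[ℂ] E) (hH : IsSelfAdjoint H)
    (ψ : E) (hψ : ‖ψ‖ = 1)
    (M Δ : ℝ) (hΔ : 0 < Δ) (hM : 0 < M)
    (hHψ : ‖H ψ‖ ≤ M)
    (hmean : Δ ≤ (⟪ψ, H ψ⟫).re)
    (Pr : E →L[ℂ] E) (hPrsa : IsSelfAdjoint Pr) (hPridem : Pr ∘L Pr = Pr)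
    (hPrcomm : Pr ∘L H = H ∘L Pr)
    (hrange : ∀ x : E, Pr x = x → x ≠ 0 → Δ / 2 * ‖x‖ ^ 2 < (⟪x, H x⟫).re)
    (hker : ∀ x : E, Pr x = 0 → (⟪x, H x⟫).re ≤ Δ / 2 * ‖x‖ ^ 2) :
    ((⟪ψ, H ψ⟫).re - Δ / 2) / M ≤ ‖Pr ψ‖ ∧ Δ / (2 * M) ≤ ((⟪ψ, H ψ⟫).re - Δ / 2) / M :=
  spectral_weight_above_half_gap_general H ψ hψ M Δ hΔ hM hHψ hmean Pr hPrsa hPridem hPrcomm hker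
end

section
/- Let H₀ be a Hermitian operator on a finite-dimensional Hilbert space and V any operator. With w as an even integrable function with ∫ w = 1 and ŵ(E) = 0 for |E| ≥ Δ/2, and W its odd tail-integral (W(t) = ∫_t^∞ w(s) ds for t > 0, W odd), define A = i ∫_{−∞}^{∞} W(t) e^{itH₀} V e^{−itH₀} dt and ℙV = ∫_{−∞}^{∞} w(t) e^{itH₀} V e^{−itH₀} dt. Then [H₀, A] + V = ℙV. -/
open MeasureTheory

open Set Filter Topology NormedSpace

set_option autoImplicit false
set_option synthInstance.maxHeartbeats 1000000
set_option maxHeartbeats 1000000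

lemma sw_parts {F : Type*} [NormedAddCommGroup F] [NormedSpace ℝ F] [CompleteSpace F]
    (w W : ℝ → ℝ)
    (hw_cont : Continuous w) (hw_even : ∀ t, w (-t) = w t)
    (hw_int : Integrable w) (hw_total : ∫ t, w t = 1)
    (hW_pos : ∀ t > (0:ℝ), W t = ∫ s in Set.Ioi t, w s)
    (hW_odd : ∀ t, W (-t) = -W t)
    (hW_int : Integrable W)
    (f f' : ℝ → F)
    (hd : ∀ t, HasDerivAt f (f' t) t)
    (hf'c : Continuous f')
    (C C' : ℝ)
    (hfC : ∀ t, ‖f t‖ ≤ C) (hf'C : ∀ t, ‖f' t‖ ≤ C') :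
    ∫ t, W t • f' t = -(f 0) + ∫ t, w t • f t := by
  have hfc : Continuous f := continuous_iff_continuousAt.2 fun t => (hd t).continuousAt
  have hfm : MemLp f ⊤ (volume : Measure ℝ) :=
    memLp_top_of_bound hfc.aestronglyMeasurable C (Filter.Eventually.of_forall hfC)
  have hf'm : MemLp f' ⊤ (volume : Measure ℝ) :=
    memLp_top_of_bound hf'c.aestronglyMeasurable C' (Filter.Eventually.of_forall hf'C)
  have hWf' : Integrable (fun t => W t • f' t) := hW_int.smul_of_top_left hf'm
  have hwf : Integrable (fun t => w t • f t) := hw_int.smul_of_top_left hfm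
  set It : ℝ → ℝ := fun t => ∫ s in Set.Iic t, w s with hItdef
  set Wp : ℝ → ℝ := fun t => ∫ s in Set.Ioi t, w s with hWpdef
  have hsum : ∀ t, It t + Wp t = 1 := by
    intro t
    rw [← hw_total]
    exact intervalIntegral.integral_Iic_add_Ioi hw_int.integrableOn hw_int.integrableOn
  have hItt : ∀ t, It t - It 0 = ∫ s in (0:ℝ)..t, w s := fun t =>
    intervalIntegral.integral_Iic_sub_Iic hw_int.integrableOn hw_int.integrableOn
  have hWpt : ∀ t, Wp t = Wp 0 - ∫ s in (0:ℝ)..t, w s := by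
    intro t
    have h1 := hsum t; have h2 := hsum 0; have h3 := hItt t
    linarith
  have hWpd : ∀ t, HasDerivAt Wp (-(w t)) t := by
    intro t
    have h : HasDerivAt (fun u => ∫ s in (0:ℝ)..u, w s) (w t) t :=
      intervalIntegral.integral_hasDerivAt_right hw_int.intervalIntegrable
        hw_cont.stronglyMeasurable.stronglyMeasurableAtFilter hw_cont.continuousAt
    have h2 : HasDerivAt (fun u => Wp 0 - ∫ s in (0:ℝ)..u, w s) (-(w t)) t := by
      exact h.const_sub (Wp 0)
    exact h2.congr_of_eventuallyEq (Filter.Eventually.of_forall hWpt)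
  have hIt_top : Tendsto It atTop (𝓝 1) := by
    have h := tendsto_setIntegral_of_monotone (μ := (volume : Measure ℝ))
      (f := w) (s := fun t : ℝ => Set.Iic t)
      (fun t => measurableSet_Iic) (fun a b hab => Set.Iic_subset_Iic.2 hab)
      (by rw [Set.iUnion_Iic]; exact hw_int.integrableOn)
    rw [Set.iUnion_Iic] at h
    simpa [Measure.restrict_univ, hw_total] using h
  have hIt_bot : Tendsto It atBot (𝓝 0) := by
    have h := tendsto_setIntegral_of_antitone (μ := (volume : Measure ℝ))
      (f := w) (s := fun t : ℝ => Set.Iic (-t))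
      (fun t => measurableSet_Iic)
      (fun a b hab => Set.Iic_subset_Iic.2 (neg_le_neg hab))
      ⟨0, hw_int.integrableOn⟩
    have hempty : ⋂ t : ℝ, Set.Iic (-t) = ∅ := by
      apply Set.eq_empty_of_forall_notMem
      intro x hx
      have := Set.mem_iInter.1 hx (-(x - 1))
      simp [Set.mem_Iic] at this
      linarith
    rw [hempty] at h
    simp only [Measure.restrict_empty, integral_zero_measure] at h
    have h2 := h.comp tendsto_neg_atBot_atTop
    exact h2.congr fun t => by simp [Function.comp, hItdef]
  have hWp_top : Tendsto Wp atTop (𝓝 0) := by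
    have h : Tendsto (fun t => 1 - It t) atTop (𝓝 (1 - 1)) := tendsto_const_nhds.sub hIt_top
    simp only [sub_self] at h
    refine h.congr fun t => ?_
    have := hsum t; linarith
  have hWp_bot : Tendsto Wp atBot (𝓝 1) := by
    have h : Tendsto (fun t => 1 - It t) atBot (𝓝 (1 - 0)) := tendsto_const_nhds.sub hIt_bot
    simp only [sub_zero] at h
    refine h.congr fun t => ?_
    have := hsum t; linarith
  -- identification of W with Wp / Wp - 1
  have hWpos' : ∀ t ∈ Set.Ioi (0:ℝ), W t = Wp t := fun t ht => hW_pos t ht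
  have hWneg : ∀ t ∈ Set.Iio (0:ℝ), W t = Wp t - 1 := by
    intro t ht
    have hmt : 0 < -t := by simpa using ht
    have h1 : W t = -(W (-t)) := by have := hW_odd t; linarith
    have h2 : (∫ s in Set.Ioi (-t), w s) = It t := by
      rw [← integral_comp_neg_Iic t w]
      exact setIntegral_congr_fun measurableSet_Iic fun s _ => (hw_even s)
    have h3 := hsum t
    rw [h1, hW_pos (-t) hmt, h2]
    linarith
  -- positive side
  have hgd : ∀ t, HasDerivAt (fun u => Wp u • f u) (Wp t • f' t + (-(w t)) • f t) t :=
    fun t => (hWpd t).smul (hd t)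
  have hwf_on : ∀ s : Set ℝ, IntegrableOn (fun t => (-(w t)) • f t) s := by
    intro s
    have : Integrable (fun t => (-(w t)) • f t) := by
      exact hwf.neg.congr (Filter.Eventually.of_forall fun t => by simp)
    exact this.integrableOn
  have hg'int : IntegrableOn (fun t => Wp t • f' t + (-(w t)) • f t) (Set.Ioi 0) := by
    refine Integrable.add ?_ (hwf_on _)
    exact (hWf'.integrableOn).congr_fun
      (fun t ht => by simp only [hWpos' t ht]) measurableSet_Ioi
  have hg_top : Tendsto (fun t => Wp t • f t) atTop (𝓝 0) := by
    have hC : Tendsto (fun t => |Wp t| * |C|) atTop (𝓝 (|0| * |C|)) :=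
      (hWp_top.abs).mul_const _
    simp only [abs_zero, zero_mul] at hC
    refine squeeze_zero_norm (fun t => ?_) hC
    rw [norm_smul, Real.norm_eq_abs]
    have h1 : ‖f t‖ ≤ |C| := (hfC t).trans (le_abs_self C)
    exact mul_le_mul_of_nonneg_left h1 (abs_nonneg _)
  have hIoi : ∫ t in Set.Ioi (0:ℝ), (Wp t • f' t + (-(w t)) • f t) = 0 - Wp 0 • f 0 :=
    integral_Ioi_of_hasDerivAt_of_tendsto' (fun x _ => hgd x) hg'int hg_top
  have hIoi' : ∫ t in Set.Ioi (0:ℝ), W t • f' t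
      = -(Wp 0 • f 0) + ∫ t in Set.Ioi (0:ℝ), w t • f t := by
    have hcongr : ∀ t ∈ Set.Ioi (0:ℝ),
        W t • f' t = (Wp t • f' t + (-(w t)) • f t) + w t • f t := by
      intro t ht
      rw [hWpos' t ht]
      simp [neg_smul]
    rw [setIntegral_congr_fun measurableSet_Ioi hcongr,
      integral_add hg'int hwf.integrableOn, hIoi]
    abel
  -- negative side
  have hhd : ∀ t, HasDerivAt (fun u => (Wp u - 1) • f u) ((Wp t - 1) • f' t + (-(w t)) • f t) t :=
    fun t => ((hWpd t).sub_const 1).smul (hd t)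
  have hae0 : ∀ᵐ t ∂(volume.restrict (Set.Iic (0:ℝ))), t ≠ (0:ℝ) := by
    refine ae_restrict_of_ae (ae_iff.2 ?_)
    have he : {t : ℝ | ¬ t ≠ 0} = {(0:ℝ)} := by ext x; simp
    rw [he]; exact Real.volume_singleton
  have haemem : ∀ᵐ t ∂(volume.restrict (Set.Iic (0:ℝ))), t ∈ Set.Iic (0:ℝ) :=
    ae_restrict_mem measurableSet_Iic
  have haeW : ∀ᵐ t ∂(volume.restrict (Set.Iic (0:ℝ))), W t = Wp t - 1 := by
    filter_upwards [hae0, haemem] with t h1 h2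
    exact hWneg t (lt_of_le_of_ne h2 h1)
  have hh'int : IntegrableOn (fun t => (Wp t - 1) • f' t + (-(w t)) • f t) (Set.Iic 0) := by
    refine Integrable.add ?_ (hwf_on _)
    refine (hWf'.integrableOn :
      IntegrableOn (fun t => W t • f' t) (Set.Iic 0) volume).congr ?_
    filter_upwards [haeW] with t ht
    rw [ht]
  have hh_bot : Tendsto (fun t => (Wp t - 1) • f t) atBot (𝓝 0) := by
    have hW0 : Tendsto (fun t => Wp t - 1) atBot (𝓝 (1 - 1)) := hWp_bot.sub_const 1
    simp only [sub_self] at hW0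
    have hC : Tendsto (fun t => |Wp t - 1| * |C|) atBot (𝓝 (|0| * |C|)) := (hW0.abs).mul_const _
    simp only [abs_zero, zero_mul] at hC
    refine squeeze_zero_norm (fun t => ?_) hC
    rw [norm_smul, Real.norm_eq_abs]
    exact mul_le_mul_of_nonneg_left ((hfC t).trans (le_abs_self C)) (abs_nonneg _)
  have hIic : ∫ t in Set.Iic (0:ℝ), ((Wp t - 1) • f' t + (-(w t)) • f t)
      = (Wp 0 - 1) • f 0 - 0 :=
    integral_Iic_of_hasDerivAt_of_tendsto' (fun x _ => hhd x) hh'int hh_bot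
  have hIic' : ∫ t in Set.Iic (0:ℝ), W t • f' t
      = (Wp 0 - 1) • f 0 + ∫ t in Set.Iic (0:ℝ), w t • f t := by
    have hcongr : (fun t => W t • f' t)
        =ᵐ[volume.restrict (Set.Iic (0:ℝ))]
        (fun t => ((Wp t - 1) • f' t + (-(w t)) • f t) + w t • f t) := by
      filter_upwards [haeW] with t ht
      rw [ht]; simp [neg_smul]
    rw [integral_congr_ae hcongr, integral_add hh'int hwf.integrableOn, hIic]
    abel
  have hsplitW : ∫ t, W t • f' t
      = (∫ t in Set.Iic (0:ℝ), W t • f' t) + ∫ t in Set.Ioi (0:ℝ), W t • f' t :=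
    (intervalIntegral.integral_Iic_add_Ioi hWf'.integrableOn hWf'.integrableOn).symm
  have hsplitw : ∫ t, w t • f t
      = (∫ t in Set.Iic (0:ℝ), w t • f t) + ∫ t in Set.Ioi (0:ℝ), w t • f t :=
    (intervalIntegral.integral_Iic_add_Ioi hwf.integrableOn hwf.integrableOn).symm
  rw [hsplitW, hIic', hIoi', hsplitw]
  have : (Wp 0 - 1) • f 0 + -(Wp 0 • f 0) = -(f 0) := by
    rw [sub_smul, one_smul]
    abel
  rw [show ((Wp 0 - 1) • f 0 + ∫ t in Set.Iic (0:ℝ), w t • f t)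
      + (-(Wp 0 • f 0) + ∫ t in Set.Ioi (0:ℝ), w t • f t)
      = ((Wp 0 - 1) • f 0 + -(Wp 0 • f 0))
        + ((∫ t in Set.Iic (0:ℝ), w t • f t) + ∫ t in Set.Ioi (0:ℝ), w t • f t) by abel, this]



/-- The fundamental Schrieffer–Wolff equation: with
`A = i ∫ W(t) e^{itH₀} V e^{-itH₀} dt` and `ℙV = ∫ w(t) e^{itH₀} V e^{-itH₀} dt`,
one has `[H₀, A] + V = ℙV`. -/
theorem schrieffer_wolff_equation
    {E : Type*} [NormedAddCommGroup E] [InnerProductSpace ℂ E] [FiniteDimensional ℂ E]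
    (H₀ V : E →L[ℂ] E) (hH₀ : IsSelfAdjoint H₀)
    (Δ : ℝ) (hΔ : 0 < Δ)
    (w W : ℝ → ℝ)
    (hw_cont : Continuous w) (hw_even : ∀ t, w (-t) = w t)
    (hw_int : Integrable w) (hw_total : ∫ t, w t = 1)
    (hw_hat : ∀ Energy : ℝ, Δ / 2 ≤ |Energy| →
      ∫ t : ℝ, (w t : ℂ) * Complex.exp (Complex.I * Energy * t) = 0)
    (hW_pos : ∀ t > (0 : ℝ), W t = ∫ s in Set.Ioi t, w s)
    (hW_odd : ∀ t, W (-t) = -W t)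
    (hW_int : Integrable W) :
    (H₀ ∘L (∫ t : ℝ, W t • (Complex.I •
          ((NormedSpace.exp ((Complex.I * t) • H₀)) ∘L V ∘L
            (NormedSpace.exp ((-(Complex.I * t)) • H₀)))))
      - (∫ t : ℝ, W t • (Complex.I •
          ((NormedSpace.exp ((Complex.I * t) • H₀)) ∘L V ∘L
            (NormedSpace.exp ((-(Complex.I * t)) • H₀))))) ∘L H₀)
      + V
      = ∫ t : ℝ, w t • ((NormedSpace.exp ((Complex.I * t) • H₀)) ∘L V ∘L
          (NormedSpace.exp ((-(Complex.I * t)) • H₀))) := by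

  letI : CompleteSpace E := FiniteDimensional.complete ℂ E
  set B : E →L[ℂ] E := Complex.I • H₀ with hB
  have harg1 : ∀ t : ℝ, (Complex.I * (t:ℂ)) • H₀ = t • B := by
    intro t
    rw [hB, mul_comm, mul_smul]
    rw [show ((t:ℂ) • (Complex.I • H₀)) = t • (Complex.I • H₀) from ?_]
    · rw [← smul_one_smul ℂ t (Complex.I • H₀)]
      norm_num
  have harg2 : ∀ t : ℝ, (-(Complex.I * (t:ℂ))) • H₀ = t • (-B) := by
    intro t
    rw [neg_smul, harg1 t, smul_neg]
  -- derivative of the two exponentials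
  have hU : ∀ t : ℝ, HasDerivAt (fun u : ℝ => exp (u • B)) (B * exp (t • B)) t := by
    intro t
    have h := hasDerivAt_exp_smul_const' (𝕂 := ℝ) (𝔸 := E →L[ℂ] E) B t
    exact h
  have hUm : ∀ t : ℝ, HasDerivAt (fun u : ℝ => exp (u • (-B)))
      (exp (t • (-B)) * (-B)) t := by
    intro t
    have h := hasDerivAt_exp_smul_const (𝕂 := ℝ) (𝔸 := E →L[ℂ] E) (-B) t
    exact h
  set f : ℝ → (E →L[ℂ] E) := fun t => exp (t • B) * V * exp (t • (-B)) with hf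
  set f' : ℝ → (E →L[ℂ] E) := fun t => B * f t - f t * B with hf'
  have hfd : ∀ t, HasDerivAt f (f' t) t := by
    intro t
    have h := ((hU t).mul_const V).mul (hUm t)
    refine HasDerivAt.congr_deriv h ?_
    simp only [hf', hf]
    noncomm_ring
  -- norm bounds
  have hskew : star B = -B := by
    rw [hB, star_smul, Complex.star_def, Complex.conj_I, hH₀.star_eq, neg_smul]
  have hstar : ∀ t : ℝ, star (t • B) = -(t • B) := by
    intro t
    rw [← smul_one_smul ℂ t B, star_smul, star_smul, hskew]
    simp
  have hnorm_exp : ∀ t : ℝ, ‖exp (t • B)‖ ≤ 1 := by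
    intro t
    have h1 : star (exp (t • B)) = exp (-(t • B)) := by
      rw [star_exp, hstar t]
    have h2 : star (exp (t • B)) * exp (t • B) = 1 := by
      letI : NormedAlgebra ℚ (E →L[ℂ] E) := NormedAlgebra.restrictScalars ℚ ℂ (E →L[ℂ] E)
      rw [h1, ← exp_add_of_commute ((Commute.refl (t • B)).neg_left)]
      simp [exp_zero]
    have h3 : ‖exp (t • B)‖ * ‖exp (t • B)‖ = ‖(1 : E →L[ℂ] E)‖ := by
      rw [← CStarRing.norm_star_mul_self, h2]
    have h4 : ‖(1 : E →L[ℂ] E)‖ ≤ 1 := by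
      rw [ContinuousLinearMap.one_def]
      exact ContinuousLinearMap.norm_id_le
    nlinarith [norm_nonneg (exp (t • B))]
  have hnorm_expm : ∀ t : ℝ, ‖exp (t • (-B))‖ ≤ 1 := by
    intro t
    have : t • (-B) = (-t) • B := by rw [smul_neg, neg_smul]
    rw [this]
    exact hnorm_exp (-t)
  have hfC : ∀ t, ‖f t‖ ≤ ‖V‖ := by
    intro t
    have h1 := norm_mul_le (exp (t • B) * V) (exp (t • (-B)))
    have h2 := norm_mul_le (exp (t • B)) V
    have h3 := hnorm_exp t
    have h4 := hnorm_expm t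
    have h5 : (0:ℝ) ≤ ‖V‖ := norm_nonneg _
    have h6 : (0:ℝ) ≤ ‖exp (t • B) * V‖ := norm_nonneg _
    calc ‖f t‖ ≤ ‖exp (t • B) * V‖ * ‖exp (t • (-B))‖ := h1
      _ ≤ ‖exp (t • B) * V‖ := by nlinarith
      _ ≤ ‖exp (t • B)‖ * ‖V‖ := h2
      _ ≤ ‖V‖ := by nlinarith
  have hf'C : ∀ t, ‖f' t‖ ≤ 2 * ‖B‖ * ‖V‖ := by
    intro t
    have h1 := norm_sub_le (B * f t) (f t * B)
    have h2 := norm_mul_le B (f t)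
    have h3 := norm_mul_le (f t) B
    have h4 := hfC t
    have h5 : (0:ℝ) ≤ ‖B‖ := norm_nonneg _
    have h6 : (0:ℝ) ≤ ‖f t‖ := norm_nonneg _
    simp only [hf']
    nlinarith
  have hfc : Continuous f := continuous_iff_continuousAt.2 fun t => (hfd t).continuousAt
  have hf'c : Continuous f' := by
    simp only [hf']
    exact (continuous_const.mul hfc).sub (hfc.mul continuous_const)
  -- final assembly
  have hfm : MemLp f ⊤ (volume : Measure ℝ) :=
    memLp_top_of_bound hfc.aestronglyMeasurable ‖V‖ (Filter.Eventually.of_forall hfC)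
  have hAint : Integrable (fun t => W t • (Complex.I • f t)) :=
    hW_int.smul_of_top_left (hfm.const_smul Complex.I)
  have hfeq : ∀ t : ℝ,
      (exp ((Complex.I * (t:ℂ)) • H₀)) ∘L V ∘L (exp ((-(Complex.I * (t:ℂ))) • H₀)) = f t := by
    intro t
    rw [harg1 t, harg2 t]
    rfl
  simp only [hfeq]
  have hleft : H₀ ∘L (∫ t : ℝ, W t • (Complex.I • f t))
      = ∫ t : ℝ, H₀ * (W t • (Complex.I • f t)) := by
    have h := (ContinuousLinearMap.mul ℂ (E →L[ℂ] E) H₀).integral_comp_comm hAint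
    simp only [ContinuousLinearMap.mul_apply'] at h
    rw [← ContinuousLinearMap.mul_def]
    exact h.symm
  have hright : (∫ t : ℝ, W t • (Complex.I • f t)) ∘L H₀
      = ∫ t : ℝ, (W t • (Complex.I • f t)) * H₀ := by
    have h := ((ContinuousLinearMap.mul ℂ (E →L[ℂ] E)).flip H₀).integral_comp_comm hAint
    simp only [ContinuousLinearMap.flip_apply, ContinuousLinearMap.mul_apply'] at h
    rw [← ContinuousLinearMap.mul_def]
    exact h.symm
  have hintL : Integrable (fun t => H₀ * (W t • (Complex.I • f t))) := by
    have h := (ContinuousLinearMap.mul ℂ (E →L[ℂ] E) H₀).integrable_comp hAint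
    simpa only [ContinuousLinearMap.mul_apply'] using h
  have hintR : Integrable (fun t => (W t • (Complex.I • f t)) * H₀) := by
    have h := ((ContinuousLinearMap.mul ℂ (E →L[ℂ] E)).flip H₀).integrable_comp hAint
    simpa only [ContinuousLinearMap.flip_apply, ContinuousLinearMap.mul_apply'] using h
  have hptwise : ∀ t : ℝ, H₀ * (W t • (Complex.I • f t)) - (W t • (Complex.I • f t)) * H₀
      = W t • f' t := by
    intro t
    simp [hf', hB, mul_smul_comm, smul_mul_assoc, smul_sub]
  have hcomm : H₀ ∘L (∫ t : ℝ, W t • (Complex.I • f t))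
      - (∫ t : ℝ, W t • (Complex.I • f t)) ∘L H₀ = ∫ t : ℝ, W t • f' t := by
    rw [hleft, hright, ← integral_sub hintL hintR]
    exact integral_congr_ae (Filter.Eventually.of_forall fun t => hptwise t)
  have key := sw_parts w W hw_cont hw_even hw_int hw_total hW_pos hW_odd hW_int f f' hfd hf'c
    ‖V‖ (2 * ‖B‖ * ‖V‖) hfC hf'C
  have hf0 : f 0 = V := by
    simp [hf]
  calc (H₀ ∘L (∫ t : ℝ, W t • (Complex.I • f t))
        - (∫ t : ℝ, W t • (Complex.I • f t)) ∘L H₀) + V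
      = (∫ t : ℝ, W t • f' t) + V := by rw [hcomm]
    _ = (-(f 0) + ∫ t, w t • f t) + V := by rw [key]
    _ = ∫ t, w t • f t := by rw [hf0]; abel
end

section
/- Let H be a Hermitian operator on a finite-dimensional Hilbert space with H|0⟩ = 0 for a unit vector |0⟩, and suppose every unit vector orthogonal to |0⟩ has ⟨φ|H|φ⟩ ≥ Δ > 0. Let |φ⟩ be a unit vector with ⟨φ|H|φ⟩ ≤ Δ/2 and write |φ⟩ = C|0⟩ + √(1−C²)|0⟩^⊥ with C = |⟨0|φ⟩| ∈ [0,1] and |0⟩^⊥ a unit vector orthogonal to |0⟩. If furthermore |⟨0|H|0⟩^⊥| ≤ M for some M ≥ Δ, then C ≥ Δ/(5M) > 0. -/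
open scoped ComplexInnerProductSpace

set_option autoImplicit false

/-- A state with energy at most half the gap must retain overlap at least `Δ/(5M)`
with the gapped zero-energy state. -/
theorem low_energy_state_overlap
    {E : Type*} [NormedAddCommGroup E] [InnerProductSpace ℂ E] [FiniteDimensional ℂ E]
    (H : E →ₗ[ℂ] E) (hH : H.IsSymmetric)
    (v0 : E) (hv0 : ‖v0‖ = 1) (hker : H v0 = 0)
    (Δ : ℝ) (hΔ : 0 < Δ)
    (hgap : ∀ ψ : E, ‖ψ‖ = 1 → ⟪v0, ψ⟫ = 0 → Δ ≤ (⟪ψ, H ψ⟫).re)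
    (φ : E) (hφ : ‖φ‖ = 1) (hlow : (⟪φ, H φ⟫).re ≤ Δ / 2)
    (C : ℝ) (hC : C ∈ Set.Icc (0 : ℝ) 1)
    (v0perp : E) (hperp_norm : ‖v0perp‖ = 1) (hperp : ⟪v0, v0perp⟫ = 0)
    (hdecomp : φ = (C : ℂ) • v0 + (Real.sqrt (1 - C ^ 2) : ℂ) • v0perp)
    (hCoverlap : (C : ℂ) = ⟪v0, φ⟫)
    (M : ℝ) (hM : Δ ≤ M)
    (hoffdiag : ‖⟪v0, H v0perp⟫‖ ≤ M) :
    Δ / (5 * M) ≤ C ∧ 0 < Δ / (5 * M) := by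

  obtain ⟨hC0, hC1⟩ := hC
  set s := Real.sqrt (1 - C ^ 2) with hs_def
  have hs0 : 0 ≤ s := Real.sqrt_nonneg _
  have hs2 : s ^ 2 = 1 - C ^ 2 := Real.sq_sqrt (by nlinarith)
  have hs1 : s ≤ 1 := by nlinarith
  have hMpos : 0 < M := lt_of_lt_of_le hΔ hM
  -- energy of the perpendicular part
  have hgapb : Δ ≤ (⟪v0perp, H v0perp⟫).re := hgap v0perp hperp_norm hperp
  have hre : (⟪v0, H v0perp⟫).re ≥ -M := by
    have h1 : |(⟪v0, H v0perp⟫).re| ≤ ‖⟪v0, H v0perp⟫‖ :=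
      Complex.abs_re_le_norm _
    have := abs_le.mp (le_trans h1 hoffdiag)
    linarith [this.1]
  -- compute the energy expectation
  have hcalc : (⟪φ, H φ⟫).re
      = C * s * (⟪v0, H v0perp⟫).re + s ^ 2 * (⟪v0perp, H v0perp⟫).re := by
    rw [hdecomp]
    simp only [map_add, map_smul, hker, smul_zero, zero_add,
      inner_add_left, inner_smul_left, inner_smul_right, Complex.conj_ofReal]
    push_cast
    ring_nf
    simp [← Complex.ofReal_pow]
    exact Or.inl (by ring)
  have key : Δ / 2 ≥ (1 - C ^ 2) * Δ - C * M := by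
    have h1 : C * s * (⟪v0, H v0perp⟫).re ≥ -(C * M) := by
      have hcs : 0 ≤ C * s := mul_nonneg hC0 hs0
      have hcs1 : C * s ≤ C := by nlinarith
      nlinarith
    have h2 : s ^ 2 * (⟪v0perp, H v0perp⟫).re ≥ (1 - C ^ 2) * Δ := by
      rw [hs2]
      nlinarith [hgapb, hC0, hC1, hΔ]
    nlinarith [hcalc, hlow]
  have hC5 : Δ / (5 * M) ≤ C := by
    rw [div_le_iff₀ (by positivity)]
    nlinarith
  exact ⟨hC5, by positivity⟩
end
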